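/- arXiv:1811.12849 — 9 statements merged into one kernel-verified Lean document; each statement's English description precedes it below -/
import Mathlib

section
/- Let H be a Hilbert space and A, B bounded operators on H. If range(A) ⊆ range(B), then there exists a constant μ ≥ 0 such that AA* ≤ μ BB*. -/
/-!
Restricted to `(ker B)ᗮ`, the operator `B` becomes injective without losing range, so
`range A ⊆ range B` lets us solve `A = B C` pointwise; the solution `C` has closed graph and
is therefore bounded. Then `A* = C* B*`, so `⟨AA*x, x⟩ = ‖A*x‖² ≤ ‖C‖² ‖B*x‖² = ‖C‖² ⟨BB*x, x⟩`.
-/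

namespace ContinuousLinearMap

variable {𝕜 E F G : Type*} [RCLike 𝕜]

section Factorization

variable [NormedAddCommGroup E] [NormedSpace 𝕜 E] [CompleteSpace E] [NormedAddCommGroup F]
  [NormedSpace 𝕜 F]

theorem exists_eq_comp_of_range_subset_of_injective [NormedAddCommGroup G] [NormedSpace 𝕜 G]
    [CompleteSpace G] (A : E →L[𝕜] F) {B : G →L[𝕜] F} (hB : Function.Injective B)
    (h : Set.range A ⊆ Set.range B) :
    ∃ C : E →L[𝕜] G, A = B ∘L C := by
  set C : E →ₗ[𝕜] G := (LinearEquiv.ofInjective (B : G →ₗ[𝕜] F) hB).symm ∘ₗ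
    (A : E →ₗ[𝕜] F).codRestrict (B : G →ₗ[𝕜] F).range fun x ↦ h ⟨x, rfl⟩
  have hBC : ∀ x, B (C x) = A x := fun x ↦ LinearEquiv.ofInjective_symm_apply (h := hB) _ _
  -- closed graph theorem: a limit `y` of `C uₙ` satisfies `B y = A x = B (C x)`
  have hC : Continuous C := C.continuous_of_seq_closed_graph fun u x y hu hCu ↦ hB <| by
    refine tendsto_nhds_unique ((B.continuous.tendsto y).comp hCu) ?_
    rw [hBC]
    convert (A.continuous.tendsto x).comp hu using 1
    exact funext fun n ↦ hBC (u n)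
  exact ⟨⟨C, hC⟩, ext fun x ↦ (hBC x).symm⟩

variable [NormedAddCommGroup G] [InnerProductSpace 𝕜 G]

theorem injective_comp_subtypeL_orthogonal_ker (B : G →L[𝕜] F) :
    Function.Injective (B ∘L B.kerᗮ.subtypeL) :=
  (injective_iff_map_eq_zero _).2 fun x hBx ↦ Subtype.ext <|
    Submodule.disjoint_def.1 B.ker.orthogonal_disjoint x hBx x.2

variable [CompleteSpace G]

theorem range_comp_subtypeL_orthogonal_ker (B : G →L[𝕜] F) :
    Set.range (B ∘L B.kerᗮ.subtypeL) = Set.range B := by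
  refine subset_antisymm (by rintro _ ⟨x, rfl⟩; exact ⟨x, rfl⟩) ?_
  rintro _ ⟨v, rfl⟩
  obtain ⟨y, hy, z, hz, rfl⟩ := B.ker.exists_add_mem_mem_orthogonal v
  exact ⟨⟨z, hz⟩, by simpa using hy⟩

theorem exists_eq_comp_of_range_subset (A : E →L[𝕜] F) (B : G →L[𝕜] F)
    (h : Set.range A ⊆ Set.range B) :
    ∃ C : E →L[𝕜] G, A = B ∘L C := by
  obtain ⟨C, hC⟩ := exists_eq_comp_of_range_subset_of_injective A
    (injective_comp_subtypeL_orthogonal_ker B) (h.trans (range_comp_subtypeL_orthogonal_ker B).ge)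
  exact ⟨B.kerᗮ.subtypeL ∘L C, hC⟩

end Factorization

section Adjoint

variable [NormedAddCommGroup E] [InnerProductSpace 𝕜 E] [CompleteSpace E]
  [NormedAddCommGroup F] [InnerProductSpace 𝕜 F] [CompleteSpace F]

theorem re_inner_apply_adjoint_apply_self (T : E →L[𝕜] F) (x : F) :
    RCLike.re (inner 𝕜 (T (adjoint T x)) x) = ‖adjoint T x‖ ^ 2 := by
  rw [← adjoint_inner_right, inner_self_eq_norm_sq]

theorem re_inner_apply_adjoint_apply_le_of_eq_comp [NormedAddCommGroup G]
    [InnerProductSpace 𝕜 G] [CompleteSpace G] {A : E →L[𝕜] F} {B : G →L[𝕜] F} {C : E →L[𝕜] G}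
    (h : A = B ∘L C) (x : F) :
    RCLike.re (inner 𝕜 (A (adjoint A x)) x) ≤
      ‖C‖ ^ 2 * RCLike.re (inner 𝕜 (B (adjoint B x)) x) := by
  rw [re_inner_apply_adjoint_apply_self, re_inner_apply_adjoint_apply_self, h, adjoint_comp,
    ← adjoint.norm_map C, ← mul_pow]
  gcongr
  exact (adjoint C).le_opNorm _

end Adjoint

end ContinuousLinearMap

variable {H : Type*} [NormedAddCommGroup H] [InnerProductSpace ℂ H] [CompleteSpace H]

/-- Douglas' theorem, (1) ⇒ (2): if `range A ⊆ range B`, then `AA* ≤ μ BB*`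
for some `μ ≥ 0`, where the inequality means
`⟨AA*x, x⟩ ≤ μ ⟨BB*x, x⟩` for all `x`. -/
theorem douglas_range_subset_imp_ineq (A B : H →L[ℂ] H)
    (h : Set.range A ⊆ Set.range B) :
    ∃ μ : ℝ, 0 ≤ μ ∧ ∀ x : H,
      (@inner ℂ _ _ (A (ContinuousLinearMap.adjoint A x)) x).re ≤
        μ * (@inner ℂ _ _ (B (ContinuousLinearMap.adjoint B x)) x).re := by
  obtain ⟨C, hC⟩ := ContinuousLinearMap.exists_eq_comp_of_range_subset A B h
  exact ⟨‖C‖ ^ 2, by positivity,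
    ContinuousLinearMap.re_inner_apply_adjoint_apply_le_of_eq_comp hC⟩
end

section
/- Let H be a Hilbert space and A, B bounded operators on H. If AA* ≤ μ BB* for some μ ≥ 0, then there exists a bounded operator C on H such that A = BC. -/
/-!
The hypothesis says exactly that `‖A* x‖ ≤ √μ ‖B* x‖`. Hence `B* x ↦ A* x` is a well-defined
bounded operator on the range of `B*`; extending it by continuity to the closure of that range and
by zero on its orthogonal complement gives a bounded `D` with `D B* = A*`, and `C = D*` works.
-/

open ContinuousLinearMap
open scoped InnerProductSpace

section

variable {𝕜 E F G : Type*} [RCLike 𝕜] [AddCommGroup E] [Module 𝕜 E]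
  [NormedAddCommGroup F] [InnerProductSpace 𝕜 F] [CompleteSpace F]
  [NormedAddCommGroup G] [NormedSpace 𝕜 G] [CompleteSpace G]

theorem LinearMap.exists_continuousLinearMap_apply_eq_of_norm_le (T : E →ₗ[𝕜] F)
    (S : E →ₗ[𝕜] G) (c : ℝ) (h : ∀ x, ‖S x‖ ≤ c * ‖T x‖) :
    ∃ D : F →L[𝕜] G, ∀ x, D (T x) = S x := by
  set K := (LinearMap.range T).topologicalClosure
  let e : E →ₗ[𝕜] K := T.codRestrict K fun x =>
    (LinearMap.range T).le_topologicalClosure (LinearMap.mem_range_self T x)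
  have he : DenseRange e := by
    rw [DenseRange, Subtype.dense_iff, ← Set.range_comp]
    exact subset_rfl
  refine ⟨S.extendOfNorm e ∘L K.orthogonalProjectionOnto, fun x => ?_⟩
  change S.extendOfNorm e (K.orthogonalProjectionOnto (e x)) = S x
  rw [K.orthogonalProjectionOnto_mem_subspace_eq_self]
  exact LinearMap.extendOfNorm_eq he ⟨c, h⟩ x

end

section

variable {𝕜 E F G : Type*} [RCLike 𝕜] [NormedAddCommGroup E] [InnerProductSpace 𝕜 E]
  [CompleteSpace E] [NormedAddCommGroup F] [InnerProductSpace 𝕜 F] [CompleteSpace F]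
  [NormedAddCommGroup G] [InnerProductSpace 𝕜 G] [CompleteSpace G]

theorem norm_adjoint_apply_sq (T : E →L[𝕜] F) (y : F) :
    ‖adjoint T y‖ ^ 2 = RCLike.re ⟪T (adjoint T y), y⟫_𝕜 := by
  simpa using apply_norm_sq_eq_inner_adjoint_left (adjoint T) y

theorem norm_adjoint_apply_le_of_re_inner_le (A : E →L[𝕜] F) (B : G →L[𝕜] F) {μ : ℝ}
    (hμ : 0 ≤ μ) (h : ∀ y, RCLike.re ⟪A (adjoint A y), y⟫_𝕜 ≤ μ * RCLike.re ⟪B (adjoint B y), y⟫_𝕜)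
    (y : F) :
    ‖adjoint A y‖ ≤ √μ * ‖adjoint B y‖ := by
  have hsq : ‖adjoint A y‖ ^ 2 ≤ (√μ * ‖adjoint B y‖) ^ 2 := by
    rw [mul_pow, Real.sq_sqrt hμ, norm_adjoint_apply_sq, norm_adjoint_apply_sq]
    exact h y
  exact (pow_le_pow_iff_left₀ (norm_nonneg _) (by positivity) two_ne_zero).mp hsq

end

variable {H : Type*} [NormedAddCommGroup H] [InnerProductSpace ℂ H] [CompleteSpace H]

/-- Douglas' theorem, (2) ⇒ (3): if `AA* ≤ μ BB*` for some `μ ≥ 0`, then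
there exists a bounded operator `C` with `A = BC`. -/
theorem douglas_ineq_imp_factorization (A B : H →L[ℂ] H) (μ : ℝ) (hμ : 0 ≤ μ)
    (h : ∀ x : H,
      (@inner ℂ _ _ (A (ContinuousLinearMap.adjoint A x)) x).re ≤
        μ * (@inner ℂ _ _ (B (ContinuousLinearMap.adjoint B x)) x).re) :
    ∃ C : H →L[ℂ] H, A = B.comp C := by
  obtain ⟨D, hD⟩ := (adjoint B : H →ₗ[ℂ] H).exists_continuousLinearMap_apply_eq_of_norm_le
    (adjoint A : H →ₗ[ℂ] H) √μ (norm_adjoint_apply_le_of_re_inner_le A B hμ h)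
  have hDB : D ∘L adjoint B = adjoint A := ext hD
  refine ⟨adjoint D, ?_⟩
  rw [← adjoint_adjoint A, ← hDB, adjoint_comp, adjoint_adjoint]
end

section
/- Let A be a closed densely defined operator from H₁ to H₂ and B = A† its Moore–Penrose inverse. Then A(I + A*A)⁻¹ = B*(I + BB*)⁻¹. -/
/-!
Write `u = (I + A*A)⁻¹ x` and `v = (I + BB*)⁻¹ x`, so `x - u = A*Au` and `x - v = BB*v`.
On `closure R(A)` the operator `B*` inverts `A*`, hence `B*(x - u) = Au`. The vector
`z = v - (x - u)` then satisfies `B*z = B*v - Au ∈ D(B)` and `z + BB*z = u - BAu ⊥ R(B)`,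
so `‖B*z‖² = ⟪z, BB*z⟫ = -‖BB*z‖²` forces `B*z = 0`, i.e. `Au = B*v`.
-/

variable {H₁ H₂ : Type*}
  [NormedAddCommGroup H₁] [InnerProductSpace ℂ H₁] [CompleteSpace H₁]
  [NormedAddCommGroup H₂] [InnerProductSpace ℂ H₂] [CompleteSpace H₂]

/-- `B` is the Moore–Penrose inverse of the closed densely defined operator `A`:
`B` is closed, `D(B) = R(A) ⊕ N(A*)`, `N(B) = N(A*)`, `ABA = A`, `BAB = B`,
`AB ⊆ P_{closure R(A)}` and `BA ⊆ P_{closure R(B)}`. -/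
def IsMPInv (A : H₁ →ₗ.[ℂ] H₂) (B : H₂ →ₗ.[ℂ] H₁) : Prop :=
  B.IsClosed ∧
  (∀ y : H₂, y ∈ B.domain ↔
    ∃ (x : A.domain) (z : A.adjoint.domain), A.adjoint z = 0 ∧ y = A x + ↑z) ∧
  (∀ (y : H₂) (hy : y ∈ B.domain), B ⟨y, hy⟩ = 0 ↔
    ∃ hy' : y ∈ A.adjoint.domain, A.adjoint ⟨y, hy'⟩ = 0) ∧
  (∀ x : A.domain, A x ∈ B.domain) ∧
  (∀ y : B.domain, (B y : H₁) ∈ A.domain) ∧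
  (∀ (x : A.domain) (h1 : A x ∈ B.domain) (h2 : B ⟨A x, h1⟩ ∈ A.domain),
    A ⟨B ⟨A x, h1⟩, h2⟩ = A x) ∧
  (∀ (y : B.domain) (h1 : (B y : H₁) ∈ A.domain) (h2 : A ⟨B y, h1⟩ ∈ B.domain),
    B ⟨A ⟨B y, h1⟩, h2⟩ = B y) ∧
  (∀ (y : B.domain) (h : (B y : H₁) ∈ A.domain),
    A ⟨B y, h⟩ ∈ (LinearMap.range A.toFun).topologicalClosure ∧
      (y : H₂) - A ⟨B y, h⟩ ∈ ((LinearMap.range A.toFun).topologicalClosure)ᗮ) ∧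
  (∀ (x : A.domain) (h : (A x : H₂) ∈ B.domain),
    B ⟨A x, h⟩ ∈ (LinearMap.range B.toFun).topologicalClosure ∧
      (x : H₁) - B ⟨A x, h⟩ ∈ ((LinearMap.range B.toFun).topologicalClosure)ᗮ)

namespace LinearPMap

variable {𝕜 E F : Type*} [RCLike 𝕜]
  [NormedAddCommGroup E] [InnerProductSpace 𝕜 E] [CompleteSpace E]
  [NormedAddCommGroup F] [InnerProductSpace 𝕜 F]
  {T : E →ₗ.[𝕜] F}

theorem mem_adjoint_graph_iff (hT : Dense (T.domain : Set E)) {y : F} {x : E} :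
    (y, x) ∈ T†.graph ↔ ∀ v : T.domain, inner 𝕜 (T v) y = inner 𝕜 (v : E) x := by
  simp [adjoint_graph_eq_graph_adjoint hT, sub_eq_zero]

theorem mem_adjoint_graph_of_mem_orthogonal_range (hT : Dense (T.domain : Set E))
    {y : F} (hy : y ∈ (LinearMap.range T.toFun)ᗮ) : (y, 0) ∈ T†.graph :=
  (mem_adjoint_graph_iff hT).mpr fun v => by
    rw [inner_zero_right]
    exact (Submodule.mem_orthogonal _ y).mp hy _ (LinearMap.mem_range_self T.toFun v)

theorem eq_zero_of_add_mem_orthogonal_range (hT : Dense (T.domain : Set E))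
    {z : F} {w : E} {q : F} (hzw : (z, w) ∈ T†.graph) (hwq : (w, q) ∈ T.graph)
    (hzq : z + q ∈ (LinearMap.range T.toFun)ᗮ) : w = 0 := by
  obtain ⟨v, rfl, rfl⟩ := (T.mem_graph_iff).mp hwq
  have hadj : inner 𝕜 (T v) z = inner 𝕜 (v : E) v := (mem_adjoint_graph_iff hT).mp hzw v
  have horth : inner 𝕜 (T v) (z + T v) = 0 :=
    (Submodule.mem_orthogonal _ _).mp hzq _ (LinearMap.mem_range_self T.toFun v)
  rw [inner_add_right, hadj, inner_self_eq_norm_sq_to_K, inner_self_eq_norm_sq_to_K] at horth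
  have hnorm : ‖(v : E)‖ ^ 2 + ‖T v‖ ^ 2 = 0 := by exact_mod_cast horth
  have hv := ((add_eq_zero_iff_of_nonneg (sq_nonneg _) (sq_nonneg _)).mp hnorm).1
  simpa using hv

end LinearPMap

open LinearPMap

namespace IsMPInv

variable {A : H₁ →ₗ.[ℂ] H₂} {B : H₂ →ₗ.[ℂ] H₁}

theorem dense_domain (hAd : Dense (A.domain : Set H₁)) (hB : IsMPInv A B) :
    Dense (B.domain : Set H₂) := by
  obtain ⟨-, hdom, -, hAB, -⟩ := hB
  set K := (LinearMap.range A.toFun).topologicalClosure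
  have hrange : K ≤ B.domain.topologicalClosure :=
    Submodule.topologicalClosure_mono (LinearMap.range_le_iff_comap.mpr
      (Submodule.eq_top_iff'.mpr hAB))
  have hkernel : Kᗮ ≤ B.domain := fun y hy => by
    rw [Submodule.orthogonal_closure] at hy
    obtain ⟨z, rfl, hz⟩ := (A†.mem_graph_iff).mp
      (mem_adjoint_graph_of_mem_orthogonal_range hAd hy)
    exact (hdom z).mpr ⟨0, z, hz, by simp⟩
  rw [Submodule.dense_iff_topologicalClosure_eq_top, eq_top_iff,
    ← Submodule.sup_orthogonal_of_hasOrthogonalProjection (K := K)]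
  exact sup_le hrange (hkernel.trans B.domain.le_topologicalClosure)

/-- For `b ∈ D(B)`, `⟪b, w⟫ = ⟪A B b, w⟫ = ⟪B b, A† w⟫` because `b - A B b ⊥ closure R(A)`. -/
theorem swap_mem_adjoint_graph (hAd : Dense (A.domain : Set H₁)) (hB : IsMPInv A B)
    {w : H₂} {y : H₁} (hwy : (w, y) ∈ A†.graph)
    (hw : w ∈ (LinearMap.range A.toFun).topologicalClosure) : (y, w) ∈ B†.graph := by
  have hBd := hB.dense_domain hAd
  obtain ⟨-, -, -, -, hBA, -, -, hPA, -⟩ := hB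
  refine (mem_adjoint_graph_iff hBd).mpr fun b => ?_
  have hadj : inner ℂ (A ⟨B b, hBA b⟩) w = inner ℂ (B b) y :=
    (mem_adjoint_graph_iff hAd).mp hwy ⟨B b, hBA b⟩
  have horth : inner ℂ ((b : H₂) - A ⟨B b, hBA b⟩) w = 0 :=
    (Submodule.mem_orthogonal' _ _).mp (hPA b (hBA b)).2 w hw
  rw [inner_sub_left, sub_eq_zero] at horth
  rw [← hadj, horth]

end IsMPInv

theorem pmap_resolvent_identity_general
    (A : H₁ →ₗ.[ℂ] H₂) (B : H₂ →ₗ.[ℂ] H₁)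
    (hAd : Dense (A.domain : Set H₁))
    (hB : IsMPInv A B)
    (RA : H₁ →L[ℂ] H₁)
    (hRA2 : ∀ (x : H₁) (h1 : RA x ∈ A.domain), A ⟨RA x, h1⟩ ∈ A.adjoint.domain)
    (hRA : ∀ (x : H₁) (h1 : RA x ∈ A.domain) (h2 : A ⟨RA x, h1⟩ ∈ A.adjoint.domain),
      RA x + A.adjoint ⟨A ⟨RA x, h1⟩, h2⟩ = x)
    (RB : H₁ →L[ℂ] H₁)
    (hRB2 : ∀ (x : H₁) (h1 : RB x ∈ B.adjoint.domain), B.adjoint ⟨RB x, h1⟩ ∈ B.domain)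
    (hRB : ∀ (x : H₁) (h1 : RB x ∈ B.adjoint.domain) (h2 : B.adjoint ⟨RB x, h1⟩ ∈ B.domain),
      RB x + B ⟨B.adjoint ⟨RB x, h1⟩, h2⟩ = x) :
    ∀ (x : H₁) (h1 : RA x ∈ A.domain) (h1' : RB x ∈ B.adjoint.domain),
      A ⟨RA x, h1⟩ = B.adjoint ⟨RB x, h1'⟩ := by
  intro x h1 h1'
  have hAu := hRA2 x h1
  have hBv := hRB2 x h1'
  have hBd := hB.dense_domain hAd
  have hAAu : (A.adjoint ⟨A ⟨RA x, h1⟩, hAu⟩, A ⟨RA x, h1⟩) ∈ B.adjoint.graph :=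
    hB.swap_mem_adjoint_graph hAd (A.adjoint.mem_graph ⟨_, hAu⟩)
      (Submodule.le_topologicalClosure _ (LinearMap.mem_range_self A.toFun _))
  obtain ⟨-, -, -, hAB, -, -, -, -, hPB⟩ := hB
  have hz := sub_mem (B.adjoint.mem_graph ⟨RB x, h1'⟩) hAAu
  have hq := sub_mem (B.mem_graph ⟨_, hBv⟩) (B.mem_graph ⟨_, hAB ⟨RA x, h1⟩⟩)
  rw [Prod.mk_sub_mk] at hz hq
  have hsum : (RB x - A.adjoint ⟨A ⟨RA x, h1⟩, hAu⟩) +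
      (B ⟨B.adjoint ⟨RB x, h1'⟩, hBv⟩ - B ⟨A ⟨RA x, h1⟩, hAB ⟨RA x, h1⟩⟩) =
      RA x - B ⟨A ⟨RA x, h1⟩, hAB ⟨RA x, h1⟩⟩ := by
    linear_combination (norm := module) hRB x h1' hBv - hRA x h1 hAu
  have hperp := (hPB ⟨RA x, h1⟩ (hAB ⟨RA x, h1⟩)).2
  rw [Submodule.orthogonal_closure, ← hsum] at hperp
  exact (sub_eq_zero.mp (eq_zero_of_add_mem_orthogonal_range hBd hz hq hperp)).symm

/-- For a closed densely defined operator `A` with Moore–Penrose inverse `B`,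
`A(I + A*A)⁻¹ = B*(I + BB*)⁻¹`. Here `RA = (I + A*A)⁻¹` and
`RB = (I + BB*)⁻¹` are the everywhere defined bounded resolvents. -/
theorem pmap_resolvent_identity
    (A : H₁ →ₗ.[ℂ] H₂) (B : H₂ →ₗ.[ℂ] H₁)
    (hA : A.IsClosed) (hAd : Dense (A.domain : Set H₁))
    (hB : IsMPInv A B)
    (RA : H₁ →L[ℂ] H₁)
    (hRA1 : ∀ x : H₁, RA x ∈ A.domain)
    (hRA2 : ∀ (x : H₁) (h1 : RA x ∈ A.domain), A ⟨RA x, h1⟩ ∈ A.adjoint.domain)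
    (hRA : ∀ (x : H₁) (h1 : RA x ∈ A.domain) (h2 : A ⟨RA x, h1⟩ ∈ A.adjoint.domain),
      RA x + A.adjoint ⟨A ⟨RA x, h1⟩, h2⟩ = x)
    (RB : H₁ →L[ℂ] H₁)
    (hRB1 : ∀ x : H₁, RB x ∈ B.adjoint.domain)
    (hRB2 : ∀ (x : H₁) (h1 : RB x ∈ B.adjoint.domain), B.adjoint ⟨RB x, h1⟩ ∈ B.domain)
    (hRB : ∀ (x : H₁) (h1 : RB x ∈ B.adjoint.domain) (h2 : B.adjoint ⟨RB x, h1⟩ ∈ B.domain),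
      RB x + B ⟨B.adjoint ⟨RB x, h1⟩, h2⟩ = x) :
    ∀ (x : H₁) (h1 : RA x ∈ A.domain) (h1' : RB x ∈ B.adjoint.domain),
      A ⟨RA x, h1⟩ = B.adjoint ⟨RB x, h1'⟩ :=
  pmap_resolvent_identity_general A B hAd hB RA hRA2 hRA RB hRB2 hRB
end

section
/- Let A be a closed densely defined operator from H₁ to H₂ with A* injective, and B = A† its Moore–Penrose inverse. Then (I + AA*)⁻¹ + (I + B*B)⁻¹ = I on H₂. -/
/-!
Since `A*` is injective, `R(A)` is dense, so `AB` is the identity on `D(B)` and `D(B)` is dense.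
Given `y`, put `w = (I + B*B)⁻¹ y` and `u = B*Bw`. Because `BA` is the orthogonal projection onto
`closure R(B)`, `⟪Bw, x⟫ = ⟪Bw, BAx⟫ = ⟪u, Ax⟫` for `x ∈ D(A)`, i.e. `A*u = Bw`. Hence
`u + AA*u = B*Bw + ABw = B*Bw + w = y`, and since `I + AA*` is injective (`⟪v, v + AA*v⟫ =
‖v‖² + ‖A*v‖²`), `u = (I + AA*)⁻¹ y`. Therefore `(I + AA*)⁻¹ y + (I + B*B)⁻¹ y = u + w = y`.
-/

variable {H₁ H₂ : Type*}
  [NormedAddCommGroup H₁] [InnerProductSpace ℂ H₁] [CompleteSpace H₁]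
  [NormedAddCommGroup H₂] [InnerProductSpace ℂ H₂] [CompleteSpace H₂]

open LinearPMap
open scoped InnerProductSpace

namespace LinearPMap

variable {𝕜 E F : Type*} [RCLike 𝕜]
  [NormedAddCommGroup E] [InnerProductSpace 𝕜 E] [CompleteSpace E]
  [NormedAddCommGroup F] [InnerProductSpace 𝕜 F]
  {T : E →ₗ.[𝕜] F}

theorem exists_adjoint_eq_zero_of_mem_orthogonal_range (hT : Dense (T.domain : Set E)) {w : F}
    (hw : w ∈ (LinearMap.range T.toFun)ᗮ) : ∃ h : w ∈ T†.domain, T† ⟨w, h⟩ = 0 := by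
  have hw' : ∀ x : T.domain, ⟪(0 : E), x⟫_𝕜 = ⟪w, T x⟫_𝕜 := fun x => by
    rw [inner_zero_left]
    exact ((Submodule.mem_orthogonal' _ _).1 hw _ ⟨x, rfl⟩).symm
  exact ⟨mem_adjoint_domain_of_exists _ ⟨0, hw'⟩, adjoint_apply_eq hT _ hw'⟩

theorem orthogonal_range_eq_bot_of_injective_adjoint (hT : Dense (T.domain : Set E))
    (hinj : Function.Injective T†) : (LinearMap.range T.toFun)ᗮ = ⊥ := by
  refine (Submodule.eq_bot_iff _).2 fun w hw => ?_
  obtain ⟨hdom, hzero⟩ := exists_adjoint_eq_zero_of_mem_orthogonal_range hT hw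
  have : (⟨w, hdom⟩ : T†.domain) = 0 := hinj (hzero.trans (map_zero _).symm)
  exact congrArg Subtype.val this

theorem eq_of_add_apply_adjoint_eq (hT : Dense (T.domain : Set E)) {u₁ u₂ : T†.domain}
    (h₁ : T† u₁ ∈ T.domain) (h₂ : T† u₂ ∈ T.domain)
    (h : (u₁ : F) + T ⟨T† u₁, h₁⟩ = u₂ + T ⟨T† u₂, h₂⟩) : (u₁ : F) = u₂ := by
  set d : F := u₁ - u₂
  set a : E := T† u₁ - T† u₂
  have hadj : ∀ (u : T†.domain) (x : T.domain), ⟪(u : F), T x⟫_𝕜 = ⟪T† u, x⟫_𝕜 :=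
    fun u x => (adjoint_isFormalAdjoint hT u x).symm
  have hcross : ⟪d, T ⟨T† u₁, h₁⟩ - T ⟨T† u₂, h₂⟩⟫_𝕜 = ⟪a, a⟫_𝕜 := by
    simp only [d, a, inner_sub_left, inner_sub_right, hadj]
  have hsum : d + (T ⟨T† u₁, h₁⟩ - T ⟨T† u₂, h₂⟩) = 0 := by
    rw [sub_add_sub_comm, h, sub_self]
  have hnorms : ((‖d‖ ^ 2 + ‖a‖ ^ 2 : ℝ) : 𝕜) = 0 := by
    push_cast
    rw [← inner_self_eq_norm_sq_to_K, ← inner_self_eq_norm_sq_to_K, ← hcross, ← inner_add_right,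
      hsum, inner_zero_right]
  have hd : ‖d‖ = 0 := by
    have : ‖d‖ ^ 2 + ‖a‖ ^ 2 = 0 := by exact_mod_cast hnorms
    nlinarith [sq_nonneg ‖a‖]
  exact sub_eq_zero.1 (norm_eq_zero.1 hd)

end LinearPMap

namespace IsMPInv

variable {E F : Type*}
  [NormedAddCommGroup E] [InnerProductSpace ℂ E] [CompleteSpace E]
  [NormedAddCommGroup F] [InnerProductSpace ℂ F]
  {A : E →ₗ.[ℂ] F} {B : F →ₗ.[ℂ] E}

theorem apply_mem_domain_inv (hB : IsMPInv A B) (x : A.domain) : (A x : F) ∈ B.domain :=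
  hB.2.2.2.1 x

theorem inv_apply_mem_domain (hB : IsMPInv A B) (y : B.domain) : (B y : E) ∈ A.domain :=
  hB.2.2.2.2.1 y

theorem dense_domain_s6 [CompleteSpace F] (hB : IsMPInv A B)
    (hA : (LinearMap.range A.toFun)ᗮ = ⊥) : Dense (B.domain : Set F) := by
  have hdense : Dense (LinearMap.range A.toFun : Set F) :=
    Submodule.dense_iff_topologicalClosure_eq_top.2 (Submodule.topologicalClosure_eq_top_iff.2 hA)
  refine hdense.mono ?_
  rintro _ ⟨x, rfl⟩
  exact hB.apply_mem_domain_inv x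

theorem apply_apply_eq_self (hB : IsMPInv A B) (hA : (LinearMap.range A.toFun)ᗮ = ⊥)
    (y : B.domain) (h : (B y : E) ∈ A.domain) : A ⟨B y, h⟩ = y := by
  have hproj := (hB.2.2.2.2.2.2.2.1 y h).2
  rw [Submodule.orthogonal_closure, hA, Submodule.mem_bot, sub_eq_zero] at hproj
  exact hproj.symm

theorem inner_apply_apply_eq (hB : IsMPInv A B) (y : B.domain) (x : A.domain)
    (h : (A x : F) ∈ B.domain) : ⟪(B y : E), B ⟨A x, h⟩⟫_ℂ = ⟪(B y : E), x⟫_ℂ := by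
  have hproj := (hB.2.2.2.2.2.2.2.2 x h).2
  rw [Submodule.orthogonal_closure, Submodule.mem_orthogonal] at hproj
  rw [eq_comm, ← sub_eq_zero, ← inner_sub_right]
  exact hproj _ ⟨y, rfl⟩

theorem exists_adjoint_adjoint_apply_eq [CompleteSpace F] (hB : IsMPInv A B)
    (hAd : Dense (A.domain : Set E)) (hBd : Dense (B.domain : Set F)) (y : B.domain)
    (hy : (B y : E) ∈ B†.domain) : ∃ h : (B† ⟨B y, hy⟩ : F) ∈ A†.domain, A† ⟨_, h⟩ = B y := by
  have hinner : ∀ x : A.domain, ⟪(B y : E), x⟫_ℂ = ⟪B† ⟨B y, hy⟩, A x⟫_ℂ := fun x => by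
    rw [← hB.inner_apply_apply_eq y x (hB.apply_mem_domain_inv x)]
    exact (adjoint_isFormalAdjoint hBd ⟨B y, hy⟩ ⟨A x, hB.apply_mem_domain_inv x⟩).symm
  exact ⟨mem_adjoint_domain_of_exists _ ⟨_, hinner⟩, adjoint_apply_eq hAd _ hinner⟩

end IsMPInv

theorem pmap_resolvent_sum_of_injective_adjoint_general
    (A : H₁ →ₗ.[ℂ] H₂) (B : H₂ →ₗ.[ℂ] H₁)
    (hAd : Dense (A.domain : Set H₁))
    (hB : IsMPInv A B)
    (hinj : ∀ y z : A.adjoint.domain, A.adjoint y = A.adjoint z → (y : H₂) = z)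
    (RA : H₂ →L[ℂ] H₂)
    (hRA1 : ∀ y : H₂, RA y ∈ A.adjoint.domain)
    (hRA2 : ∀ (y : H₂) (h1 : RA y ∈ A.adjoint.domain), A.adjoint ⟨RA y, h1⟩ ∈ A.domain)
    (hRA : ∀ (y : H₂) (h1 : RA y ∈ A.adjoint.domain) (h2 : A.adjoint ⟨RA y, h1⟩ ∈ A.domain),
      RA y + A ⟨A.adjoint ⟨RA y, h1⟩, h2⟩ = y)
    (RB : H₂ →L[ℂ] H₂)
    (hRB1 : ∀ y : H₂, RB y ∈ B.domain)
    (hRB2 : ∀ (y : H₂) (h1 : RB y ∈ B.domain), B ⟨RB y, h1⟩ ∈ B.adjoint.domain)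
    (hRB : ∀ (y : H₂) (h1 : RB y ∈ B.domain) (h2 : B ⟨RB y, h1⟩ ∈ B.adjoint.domain),
      RB y + B.adjoint ⟨B ⟨RB y, h1⟩, h2⟩ = y) :
    RA + RB = 1 := by
  have hrange := orthogonal_range_eq_bot_of_injective_adjoint hAd
    fun y z h => Subtype.ext (hinj y z h)
  ext y
  set w : B.domain := ⟨RB y, hRB1 y⟩
  have hBw := hB.inv_apply_mem_domain w
  obtain ⟨hu, hAu⟩ := hB.exists_adjoint_adjoint_apply_eq hAd (hB.dense_domain_s6 hrange) w (hRB2 y _)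
  have hAu_mem : A† ⟨_, hu⟩ ∈ A.domain := by rw [hAu]; exact hBw
  have hAAu : A ⟨A† ⟨_, hu⟩, hAu_mem⟩ = RB y := by
    rw [show (⟨A† ⟨_, hu⟩, hAu_mem⟩ : A.domain) = ⟨B w, hBw⟩ from Subtype.ext hAu]
    exact hB.apply_apply_eq_self hrange w hBw
  have hu_eq : B† ⟨B w, hRB2 y _⟩ = RA y := by
    refine eq_of_add_apply_adjoint_eq hAd (u₁ := ⟨_, hu⟩) (u₂ := ⟨RA y, hRA1 y⟩)
      hAu_mem (hRA2 y _) ?_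
    rw [hAAu, hRA, add_comm]
    exact hRB y _ _
  show RA y + RB y = y
  rw [← hu_eq, add_comm]
  exact hRB y _ _

/-- For a closed densely defined `A` with injective adjoint `A*` and
Moore–Penrose inverse `B`, `(I + AA*)⁻¹ + (I + B*B)⁻¹ = I` on `H₂`. -/
theorem pmap_resolvent_sum_of_injective_adjoint
    (A : H₁ →ₗ.[ℂ] H₂) (B : H₂ →ₗ.[ℂ] H₁)
    (hA : A.IsClosed) (hAd : Dense (A.domain : Set H₁))
    (hB : IsMPInv A B)
    (hinj : ∀ y z : A.adjoint.domain, A.adjoint y = A.adjoint z → (y : H₂) = z)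
    (RA : H₂ →L[ℂ] H₂)
    (hRA1 : ∀ y : H₂, RA y ∈ A.adjoint.domain)
    (hRA2 : ∀ (y : H₂) (h1 : RA y ∈ A.adjoint.domain), A.adjoint ⟨RA y, h1⟩ ∈ A.domain)
    (hRA : ∀ (y : H₂) (h1 : RA y ∈ A.adjoint.domain) (h2 : A.adjoint ⟨RA y, h1⟩ ∈ A.domain),
      RA y + A ⟨A.adjoint ⟨RA y, h1⟩, h2⟩ = y)
    (RB : H₂ →L[ℂ] H₂)
    (hRB1 : ∀ y : H₂, RB y ∈ B.domain)
    (hRB2 : ∀ (y : H₂) (h1 : RB y ∈ B.domain), B ⟨RB y, h1⟩ ∈ B.adjoint.domain)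
    (hRB : ∀ (y : H₂) (h1 : RB y ∈ B.domain) (h2 : B ⟨RB y, h1⟩ ∈ B.adjoint.domain),
      RB y + B.adjoint ⟨B ⟨RB y, h1⟩, h2⟩ = y) :
    RA + RB = 1 :=
  pmap_resolvent_sum_of_injective_adjoint_general A B hAd hB hinj RA hRA1 hRA2 hRA RB hRB1 hRB2 hRB
end

section
/- Let A be a bounded operator from H₁ to H₂ and B its Moore–Penrose inverse. Then for all x ∈ range(B), ‖x‖² = ‖(I + BB*)^{-1/2} x‖² + ‖(I + A*A)^{-1/2} x‖². -/
open ContinuousLinearMap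

variable {H₁ H₂ : Type*}
  [NormedAddCommGroup H₁] [InnerProductSpace ℂ H₁] [CompleteSpace H₁]
  [NormedAddCommGroup H₂] [InnerProductSpace ℂ H₂] [CompleteSpace H₂]

/-- `B` is the Moore–Penrose inverse of the bounded operator `A`:
`ABA = A`, `BAB = B`, `AB` is the orthogonal projection onto `range A` and
`BA` is the orthogonal projection onto `range B`. -/
def IsMP (A : H₁ →L[ℂ] H₂) (B : H₂ →L[ℂ] H₁) : Prop :=
  A.comp (B.comp A) = A ∧ B.comp (A.comp B) = B ∧
  (∀ y : H₂, y - A (B y) ∈ (LinearMap.range (A : H₁ →ₗ[ℂ] H₂))ᗮ) ∧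
  (∀ x : H₁, x - B (A x) ∈ (LinearMap.range (B : H₂ →ₗ[ℂ] H₁))ᗮ)

/-!
On `range B` the two resolvents add up to the identity,
`(I + BB*)⁻¹ + (I + A*A)⁻¹ = I`: the Moore–Penrose relations give `BB* · A*A = BA`, the
projection onto `range B`, and `BA · A*A = A*A`, so `(I + BB*) A*A (I + A*A)⁻¹ = BA`.
Hence `S₁² x + S₂² x = x` for `x ∈ range B`, and pairing with `x` gives the identity since `S₁`
and `S₂` are self-adjoint.
-/

section

variable {𝕜 E : Type*} [RCLike 𝕜] [NormedAddCommGroup E] [InnerProductSpace 𝕜 E]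
  [CompleteSpace E]

theorem ContinuousLinearMap.isSelfAdjoint_of_sub_apply_mem_orthogonal_range
    {T : E →L[𝕜] E} (hT : ∀ y, y - T y ∈ (LinearMap.range (T : E →ₗ[𝕜] E))ᗮ) :
    IsSelfAdjoint T := by
  have inner_apply_eq (u v : E) : inner 𝕜 (T u) v = inner 𝕜 (T u) (T v) := by
    have h := (Submodule.mem_orthogonal _ _).mp (hT v) _ ⟨u, rfl⟩
    rwa [inner_sub_right, sub_eq_zero] at h
  refine isSelfAdjoint_iff_isSymmetric.mpr fun u v => ?_
  rw [coe_coe, inner_apply_eq u v, ← inner_conj_symm u, inner_apply_eq v u, inner_conj_symm]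

theorem ContinuousLinearMap.IsSelfAdjoint.apply_norm_sq_eq_re_inner {S : E →L[𝕜] E}
    (hS : IsSelfAdjoint S) (x : E) : ‖S x‖ ^ 2 = RCLike.re (inner 𝕜 x (S (S x))) := by
  rw [apply_norm_sq_eq_inner_adjoint_right, hS.adjoint_eq, comp_apply]

theorem norm_sq_eq_add_norm_apply_sq_of_isSelfAdjoint {S₁ S₂ : E →L[𝕜] E}
    (hS₁ : IsSelfAdjoint S₁) (hS₂ : IsSelfAdjoint S₂) {x : E}
    (hx : S₁ (S₁ x) + S₂ (S₂ x) = x) : ‖x‖ ^ 2 = ‖S₁ x‖ ^ 2 + ‖S₂ x‖ ^ 2 := by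
  rw [hS₁.apply_norm_sq_eq_re_inner, hS₂.apply_norm_sq_eq_re_inner, ← map_add,
    ← inner_add_right, hx, inner_self_eq_norm_sq]

end

/-- Applied with `p = BA`, `q = BB*`, `k = A*A`, `t₁ = (I + BB*)⁻¹`, `t₂ = (I + A*A)⁻¹`. -/
theorem mul_add_mul_eq_self_of_inverses {R : Type*} [Ring R] {p q k t₁ t₂ : R}
    (hp : IsIdempotentElem p) (hqk : q * k = p) (hpk : p * k = k)
    (ht₁ : t₁ * (1 + q) = 1) (ht₂ : (1 + k) * t₂ = 1) :
    t₁ * p + t₂ * p = p := by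
  have hpt₂ : p * t₂ = p - k * t₂ := by
    have ht₂' : t₂ = 1 - k * t₂ := eq_sub_of_add_eq (by rwa [add_mul, one_mul] at ht₂)
    calc p * t₂ = p * (1 - k * t₂) := by conv_lhs => rw [ht₂']
      _ = p - p * k * t₂ := by noncomm_ring
      _ = p - k * t₂ := by rw [hpk]
  have ht₁p : t₁ * p = k * t₂ := by
    have h : (1 + q) * (k * t₂) = p := by
      rw [add_mul, one_mul, ← mul_assoc, hqk, hpt₂, add_sub_cancel]
    rw [← h, ← mul_assoc, ht₁, one_mul]
  calc t₁ * p + t₂ * p = t₁ * p * p + t₂ * p := by rw [mul_assoc, hp.eq]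
    _ = (1 + k) * t₂ * p := by rw [ht₁p]; noncomm_ring
    _ = p := by rw [ht₂, one_mul]

namespace IsMP

variable {E F : Type*} [NormedAddCommGroup E] [InnerProductSpace ℂ E]
  [NormedAddCommGroup F] [InnerProductSpace ℂ F] {A : E →L[ℂ] F} {B : F →L[ℂ] E}

theorem symm (hB : IsMP A B) : IsMP B A :=
  ⟨hB.2.1, hB.1, hB.2.2.2, hB.2.2.1⟩

theorem isIdempotentElem_comp (hB : IsMP A B) : IsIdempotentElem (B ∘L A) := by
  rw [IsIdempotentElem, mul_def, comp_assoc, hB.1]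

theorem isSelfAdjoint_comp [CompleteSpace F] (hB : IsMP A B) : IsSelfAdjoint (A ∘L B) := by
  refine isSelfAdjoint_of_sub_apply_mem_orthogonal_range fun y => ?_
  exact Submodule.orthogonal_le (LinearMap.range_comp_le_range _ _) (hB.2.2.1 y)

theorem adjoint_comp_adjoint [CompleteSpace E] [CompleteSpace F] (hB : IsMP A B) :
    adjoint B ∘L adjoint A = A ∘L B := by
  rw [← adjoint_comp, hB.isSelfAdjoint_comp.adjoint_eq]

theorem comp_comp_adjoint [CompleteSpace E] [CompleteSpace F] (hB : IsMP A B) :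
    (B ∘L A) ∘L adjoint A = adjoint A := by
  rw [← hB.symm.isSelfAdjoint_comp.adjoint_eq, ← adjoint_comp, hB.1]

theorem comp_adjoint_mul_adjoint_comp [CompleteSpace E] [CompleteSpace F] (hB : IsMP A B) :
    (B ∘L adjoint B) * (adjoint A ∘L A) = B ∘L A := by
  calc (B ∘L adjoint B) * (adjoint A ∘L A) = B ∘L (adjoint B ∘L adjoint A) ∘L A := by
        simp only [mul_def, comp_assoc]
    _ = B ∘L A := by rw [hB.adjoint_comp_adjoint, ← comp_assoc, hB.2.1]

theorem comp_mul_adjoint_comp [CompleteSpace E] [CompleteSpace F] (hB : IsMP A B) :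
    (B ∘L A) * (adjoint A ∘L A) = adjoint A ∘L A := by
  rw [mul_def, ← comp_assoc, hB.comp_comp_adjoint]

end IsMP

theorem mp_norm_identity_on_range_general (A : H₁ →L[ℂ] H₂) (B : H₂ →L[ℂ] H₁)
    (hB : IsMP A B)
    (S₁ : H₁ →L[ℂ] H₁) (hS₁pos : S₁.IsPositive)
    (hS₁a : (S₁.comp S₁).comp (1 + B.comp (adjoint B)) = 1)
    (S₂ : H₁ →L[ℂ] H₁) (hS₂pos : S₂.IsPositive)
    (hS₂b : (1 + (adjoint A).comp A).comp (S₂.comp S₂) = 1) :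
    ∀ x ∈ Set.range B, ‖x‖ ^ 2 = ‖S₁ x‖ ^ 2 + ‖S₂ x‖ ^ 2 := by
  rintro _ ⟨y, rfl⟩
  have hsum := mul_add_mul_eq_self_of_inverses hB.isIdempotentElem_comp
    hB.comp_adjoint_mul_adjoint_comp hB.comp_mul_adjoint_comp hS₁a hS₂b
  have hfix : B (A (B y)) = B y := congr($(hB.2.1) y)
  refine norm_sq_eq_add_norm_apply_sq_of_isSelfAdjoint hS₁pos.isSelfAdjoint
    hS₂pos.isSelfAdjoint ?_
  simpa [hfix] using congr($hsum (B y))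

/-- For a bounded `A` with Moore–Penrose inverse `B`,
`S₁ = (I + BB*)^{-1/2}` and `S₂ = (I + A*A)^{-1/2}`, every `x ∈ range B`
satisfies `‖x‖² = ‖(I + BB*)^{-1/2} x‖² + ‖(I + A*A)^{-1/2} x‖²`. -/
theorem mp_norm_identity_on_range (A : H₁ →L[ℂ] H₂) (B : H₂ →L[ℂ] H₁)
    (hB : IsMP A B)
    (S₁ : H₁ →L[ℂ] H₁) (hS₁pos : S₁.IsPositive)
    (hS₁a : (S₁.comp S₁).comp (1 + B.comp (adjoint B)) = 1)
    (hS₁b : (1 + B.comp (adjoint B)).comp (S₁.comp S₁) = 1)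
    (S₂ : H₁ →L[ℂ] H₁) (hS₂pos : S₂.IsPositive)
    (hS₂a : (S₂.comp S₂).comp (1 + (adjoint A).comp A) = 1)
    (hS₂b : (1 + (adjoint A).comp A).comp (S₂.comp S₂) = 1) :
    ∀ x ∈ Set.range B, ‖x‖ ^ 2 = ‖S₁ x‖ ^ 2 + ‖S₂ x‖ ^ 2 :=
  mp_norm_identity_on_range_general A B hB S₁ hS₁pos hS₁a S₂ hS₂pos hS₂b
end

section
/- Let A be a bounded operator from H₁ to H₂ and B its Moore–Penrose inverse. Then the operator B*(I + BB*)^{-1/2} : H₁ → H₂ is bounded with closed range, and its Moore–Penrose inverse is T_B = B(I + B*B)^{-1/2} + A*(I + B*B)^{-1/2}. -/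
/-!
Write `L = B*S₁` and `M = (B + A*)S₂`. The positive square roots intertwine `B`: from
`(1 + BB*)B = B(1 + B*B)` one gets `S₁²B = BS₂²`, and passing to square roots (via the block
operator `[[0, B], [0, 0]]`, which commutes with `diag(S₁², S₂²)`) gives `S₁B = BS₂`, i.e.
`L = S₂B*`. With this, `ML = (BB* + BA)S₁² = BA(1 + BB*)S₁² = BA` and
`LM = S₂(B*B + AB)S₂` is selfadjoint; the remaining Penrose equations `LML = L`, `MLM = M`
follow from `B*(BA) = B*` and `(BA)A* = A*`. Closedness of the range is automatic for an
operator with a Moore–Penrose inverse: it is the fixed-point set of `LM`.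
-/

open ContinuousLinearMap

variable {H₁ H₂ : Type*}
  [NormedAddCommGroup H₁] [InnerProductSpace ℂ H₁] [CompleteSpace H₁]
  [NormedAddCommGroup H₂] [InnerProductSpace ℂ H₂] [CompleteSpace H₂]

section Hilbert

variable {𝕜 E F : Type*} [RCLike 𝕜]
  [NormedAddCommGroup E] [InnerProductSpace 𝕜 E] [NormedAddCommGroup F] [InnerProductSpace 𝕜 F]

theorem isSelfAdjoint_comp_of_sub_mem_orthogonal [CompleteSpace F] (A : E →L[𝕜] F)
    (B : F →L[𝕜] E) (h : ∀ y, y - A (B y) ∈ (LinearMap.range (A : E →ₗ[𝕜] F))ᗮ) :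
    IsSelfAdjoint (A ∘L B) := by
  have key (u v : F) : inner 𝕜 (A (B u)) v = inner 𝕜 (A (B u)) (A (B v)) :=
    sub_eq_zero.mp <| inner_sub_right (𝕜 := 𝕜) _ v _ ▸
      (Submodule.mem_orthogonal _ _).mp (h v) _ ⟨B u, rfl⟩
  rw [isSelfAdjoint_iff_isSymmetric]
  intro u v
  simp only [coe_coe, comp_apply]
  rw [key, ← inner_conj_symm, ← key, inner_conj_symm]

theorem sub_mem_orthogonal_range_of_isSelfAdjoint [CompleteSpace F] {A : E →L[𝕜] F}
    {B : F →L[𝕜] E} (h : A ∘L (B ∘L A) = A) (hP : IsSelfAdjoint (A ∘L B)) (y : F) :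
    y - A (B y) ∈ (LinearMap.range (A : E →ₗ[𝕜] F))ᗮ := by
  rintro _ ⟨x, rfl⟩
  have hABA (z : E) : A (B (A z)) = A z := congr($h z)
  calc inner 𝕜 (A x) (y - A (B y)) = inner 𝕜 (A (B (A x))) (y - A (B y)) := by rw [hABA]
    _ = inner 𝕜 (A x) (A (B (y - A (B y)))) := hP.isSymmetric _ _
    _ = 0 := by rw [map_sub, map_sub, hABA, sub_self, inner_zero_right]

theorem comp_eq_comp_of_leftInverse_of_rightInverse {u u' : E →L[𝕜] E} {v v' : F →L[𝕜] F}
    {B : F →L[𝕜] E} (hu : u' ∘L u = 1) (hv : v ∘L v' = 1) (h : u ∘L B = B ∘L v) :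
    u' ∘L B = B ∘L v' :=
  calc u' ∘L B = u' ∘L (B ∘L (v ∘L v')) := by rw [hv]; rfl
    _ = (u' ∘L u) ∘L (B ∘L v') := by rw [← comp_assoc B, ← h]; rfl
    _ = B ∘L v' := by rw [hu]; rfl

end Hilbert

theorem commute_of_commute_mul_self {A : Type*} [CStarAlgebra A] [PartialOrder A]
    [StarOrderedRing A] {a b : A} (ha : 0 ≤ a) (h : Commute (a * a) b) : Commute a b := by
  have : cfcₙ NNReal.sqrt (a * a) = a := CFC.sqrt_mul_self a
  exact this ▸ h.cfcₙ_nnreal NNReal.sqrt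

section ComplexHilbert

variable {E F : Type*} [NormedAddCommGroup E] [InnerProductSpace ℂ E]
  [NormedAddCommGroup F] [InnerProductSpace ℂ F]

open ComplexOrder in
theorem isPositive_conj_prodMap {S₁ : E →L[ℂ] E} {S₂ : F →L[ℂ] F} (h₁ : S₁.IsPositive)
    (h₂ : S₂.IsPositive) :
    ((WithLp.prodContinuousLinearEquiv 2 ℂ E F).symm.conjContinuousAlgEquiv
      (S₁.prodMap S₂)).IsPositive := by
  rw [isPositive_iff]
  refine ⟨fun x y => ?_, fun x => ?_⟩
  · show inner ℂ (WithLp.toLp 2 (S₁ x.fst, S₂ x.snd)) y =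
      inner ℂ x (WithLp.toLp 2 (S₁ y.fst, S₂ y.snd))
    simp only [WithLp.prod_inner_apply]
    exact congr_arg₂ (· + ·) (h₁.isSymmetric _ _) (h₂.isSymmetric _ _)
  · show 0 ≤ inner ℂ (WithLp.toLp 2 (S₁ x.fst, S₂ x.snd)) x
    rw [WithLp.prod_inner_apply]
    exact add_nonneg (h₁.inner_nonneg_left _) (h₂.inner_nonneg_left _)

theorem ContinuousLinearMap.IsPositive.comp_eq_comp_of_mul_self [CompleteSpace E]
    [CompleteSpace F] {S₁ : E →L[ℂ] E} {S₂ : F →L[ℂ] F} {B : F →L[ℂ] E} (h₁ : S₁.IsPositive)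
    (h₂ : S₂.IsPositive) (h : (S₁ ∘L S₁) ∘L B = B ∘L (S₂ ∘L S₂)) :
    S₁ ∘L B = B ∘L S₂ := by
  let conj := (WithLp.prodContinuousLinearEquiv 2 ℂ E F).symm.conjContinuousAlgEquiv
  let S := conj (S₁.prodMap S₂)
  let W := conj ((B ∘L snd ℂ E F).prod 0)
  have hcomm : Commute (S * S) W := by
    ext x : 1
    apply WithLp.ofLp_injective
    refine Prod.ext ?_ ?_
    · exact congr($h x.snd)
    · simp [S, W, conj]
  have key := (commute_of_commute_mul_self
    ((nonneg_iff_isPositive S).2 (isPositive_conj_prodMap h₁ h₂)) hcomm).eq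
  ext y
  exact congr(($key (WithLp.toLp 2 (0, y))).fst)

theorem IsMP.symm_s9 {A : E →L[ℂ] F} {B : F →L[ℂ] E} (h : IsMP A B) : IsMP B A :=
  ⟨h.2.1, h.1, h.2.2.2, h.2.2.1⟩

theorem IsMP.isClosed_range {A : E →L[ℂ] F} {B : F →L[ℂ] E} (h : IsMP A B) :
    IsClosed (Set.range A) := by
  have : Set.range A = {y | A (B y) = y} := by
    ext y
    refine ⟨?_, fun hy => ⟨B y, hy⟩⟩
    rintro ⟨x, rfl⟩
    exact DFunLike.congr_fun h.1 x
  rw [this]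
  exact isClosed_eq (A ∘L B).continuous continuous_id

variable [CompleteSpace E] [CompleteSpace F]

theorem isMP_iff {A : E →L[ℂ] F} {B : F →L[ℂ] E} :
    IsMP A B ↔ A ∘L (B ∘L A) = A ∧ B ∘L (A ∘L B) = B ∧
      IsSelfAdjoint (A ∘L B) ∧ IsSelfAdjoint (B ∘L A) :=
  ⟨fun ⟨hABA, hBAB, hP, hQ⟩ => ⟨hABA, hBAB, isSelfAdjoint_comp_of_sub_mem_orthogonal A B hP,
      isSelfAdjoint_comp_of_sub_mem_orthogonal B A hQ⟩,
    fun ⟨hABA, hBAB, hP, hQ⟩ => ⟨hABA, hBAB, sub_mem_orthogonal_range_of_isSelfAdjoint hABA hP,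
      sub_mem_orthogonal_range_of_isSelfAdjoint hBAB hQ⟩⟩

theorem IsMP.adjoint_comp_adjoint_s9 {A : E →L[ℂ] F} {B : F →L[ℂ] E} (h : IsMP A B) :
    adjoint A ∘L adjoint B = B ∘L A := by
  rw [← adjoint_comp]
  exact (isMP_iff.1 h).2.2.2

theorem IsMP.adjoint_comp_comp {A : E →L[ℂ] F} {B : F →L[ℂ] E} (h : IsMP A B) :
    adjoint B ∘L (B ∘L A) = adjoint B := by
  rw [← h.adjoint_comp_adjoint_s9, ← adjoint_comp, ← adjoint_comp, comp_assoc, h.2.1]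

theorem IsMP.comp_comp_adjoint_s9 {A : E →L[ℂ] F} {B : F →L[ℂ] E} (h : IsMP A B) :
    (B ∘L A) ∘L adjoint A = adjoint A := by
  rw [← h.adjoint_comp_adjoint_s9, comp_assoc, ← adjoint_comp, ← adjoint_comp, comp_assoc, h.1]

theorem IsMP.adjoint_comp_add_adjoint_comp {A : E →L[ℂ] F} {B : F →L[ℂ] E} (hB : IsMP A B)
    {S₁ : E →L[ℂ] E} {S₂ : F →L[ℂ] F} (hS₂ : IsSelfAdjoint S₂)
    (hS₁ : (1 + B ∘L adjoint B) ∘L (S₁ ∘L S₁) = 1)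
    (hint : adjoint B ∘L S₁ = S₂ ∘L adjoint B) :
    IsMP (adjoint B ∘L S₁) (B ∘L S₂ + adjoint A ∘L S₂) := by
  obtain ⟨-, hBAB, hP, hQ⟩ := isMP_iff.1 hB
  have hBAB' (y : F) : B (A (B y)) = B y := congr($hBAB y)
  have hQ' (x : E) : adjoint A (adjoint B x) = B (A x) := congr($hB.adjoint_comp_adjoint_s9 x)
  have hP' (y : F) : adjoint B (adjoint A y) = A (B y) := congr($hB.symm_s9.adjoint_comp_adjoint_s9 y)
  have hQA (y : F) : B (A (adjoint A y)) = adjoint A y := congr($hB.comp_comp_adjoint_s9 y)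
  have hint' (x : E) : adjoint B (S₁ x) = S₂ (adjoint B x) := congr($hint x)
  set L := adjoint B ∘L S₁
  set M := B ∘L S₂ + adjoint A ∘L S₂
  have hML : M ∘L L = B ∘L A := by
    ext x
    have hx : S₁ (S₁ x) + B (adjoint B (S₁ (S₁ x))) = x := by simpa using congr($hS₁ x)
    conv_rhs => rw [← hx]
    simp [L, M, ← hint', hBAB', hQ', add_comm]
  have hLML : L ∘L (M ∘L L) = L := by
    rw [hML, hint, comp_assoc, hB.adjoint_comp_comp]
  have hMLM : M ∘L (L ∘L M) = M := by
    rw [← comp_assoc, hML]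
    ext y
    simp [M, hBAB', hQA]
  have hLM : IsSelfAdjoint (L ∘L M) := by
    have := ((isPositive_adjoint_comp_self B).isSelfAdjoint.add hP).adjoint_conj S₂
    rw [hS₂.adjoint_eq] at this
    convert this using 1
    ext y
    simp [L, M, hint', hP']
  exact isMP_iff.2 ⟨hLML, hMLM, hLM, hML ▸ hQ⟩

end ComplexHilbert

theorem mp_of_normalized_adjoint_general (A : H₁ →L[ℂ] H₂) (B : H₂ →L[ℂ] H₁)
    (hB : IsMP A B)
    (S₁ : H₁ →L[ℂ] H₁) (hS₁pos : S₁.IsPositive)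
    (hS₁a : (S₁.comp S₁).comp (1 + B.comp (adjoint B)) = 1)
    (hS₁b : (1 + B.comp (adjoint B)).comp (S₁.comp S₁) = 1)
    (S₂ : H₂ →L[ℂ] H₂) (hS₂pos : S₂.IsPositive)
    (hS₂b : (1 + (adjoint B).comp B).comp (S₂.comp S₂) = 1) :
    IsClosed (Set.range ((adjoint B).comp S₁)) ∧
    IsMP ((adjoint B).comp S₁) (B.comp S₂ + (adjoint A).comp S₂) := by
  have hS₁B : S₁ ∘L B = B ∘L S₂ := by
    refine hS₁pos.comp_eq_comp_of_mul_self hS₂pos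
      (comp_eq_comp_of_leftInverse_of_rightInverse hS₁a hS₂b ?_)
    ext y
    simp
  have hint : adjoint B ∘L S₁ = S₂ ∘L adjoint B := by
    simpa only [adjoint_comp, hS₁pos.isSelfAdjoint.adjoint_eq, hS₂pos.isSelfAdjoint.adjoint_eq]
      using congr(adjoint $hS₁B)
  have hMP := hB.adjoint_comp_add_adjoint_comp hS₂pos.isSelfAdjoint hS₁b hint
  exact ⟨hMP.isClosed_range, hMP⟩

/-- For a bounded `A` with Moore–Penrose inverse `B`,
`S₁ = (I + BB*)^{-1/2}` and `S₂ = (I + B*B)^{-1/2}`, the bounded operator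
`B*(I + BB*)^{-1/2}` has closed range and its Moore–Penrose inverse is
`T_B = B(I + B*B)^{-1/2} + A*(I + B*B)^{-1/2}`. -/
theorem mp_of_normalized_adjoint (A : H₁ →L[ℂ] H₂) (B : H₂ →L[ℂ] H₁)
    (hB : IsMP A B)
    (S₁ : H₁ →L[ℂ] H₁) (hS₁pos : S₁.IsPositive)
    (hS₁a : (S₁.comp S₁).comp (1 + B.comp (adjoint B)) = 1)
    (hS₁b : (1 + B.comp (adjoint B)).comp (S₁.comp S₁) = 1)
    (S₂ : H₂ →L[ℂ] H₂) (hS₂pos : S₂.IsPositive)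
    (hS₂a : (S₂.comp S₂).comp (1 + (adjoint B).comp B) = 1)
    (hS₂b : (1 + (adjoint B).comp B).comp (S₂.comp S₂) = 1) :
    IsClosed (Set.range ((adjoint B).comp S₁)) ∧
    IsMP ((adjoint B).comp S₁) (B.comp S₂ + (adjoint A).comp S₂) :=
  mp_of_normalized_adjoint_general A B hB S₁ hS₁pos hS₁a hS₁b S₂ hS₂pos hS₂b
end

section
/- Let A be a bounded operator from H₁ to H₂ and B its Moore–Penrose inverse. Then B*(I + BB*)^{-1/2} restricts to an isomorphism from null(B*)^⊥ onto range(B*). -/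
open ContinuousLinearMap

variable {H₁ H₂ : Type*}
  [NormedAddCommGroup H₁] [InnerProductSpace ℂ H₁] [CompleteSpace H₁]
  [NormedAddCommGroup H₂] [InnerProductSpace ℂ H₂] [CompleteSpace H₂]

/-! The Moore–Penrose conditions make `AB` a self-adjoint idempotent with
`range B* = range AB`, so `B*` has closed range and, by the open mapping theorem, restricts
to an isomorphism `(ker B*)ᗮ ≃ range B*`. Since `S₁²` is invertible with inverse `1 + BB*`,
the operator `S₁` is invertible and commutes with `BB*`; it therefore preserves
`ker BB* = ker B*`, so `B* S₁` has the same kernel and range as `B*`. -/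

section

variable {𝕜 E : Type*} [RCLike 𝕜] [NormedAddCommGroup E] [InnerProductSpace 𝕜 E]
  [CompleteSpace E]

theorem ContinuousLinearMap.exists_orthogonal_ker_equiv_range
    {F : Type*} [NormedAddCommGroup F] [NormedSpace 𝕜 F] [CompleteSpace F]
    (C : E →L[𝕜] F) (hC : IsClosed (C.range : Set F)) :
    ∃ e : C.kerᗮ ≃L[𝕜] C.range, ∀ x, (e x : F) = C x := by
  have : CompleteSpace C.ker := C.isClosed_ker.completeSpace_coe
  have : CompleteSpace C.range := hC.completeSpace_coe
  let f : C.kerᗮ →L[𝕜] C.range :=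
    (C ∘L C.kerᗮ.subtypeL).codRestrict C.range fun x => ⟨x, rfl⟩
  have hinj : f.ker = ⊥ := by
    refine LinearMap.ker_eq_bot'.2 fun x hx => ?_
    have hx' : (x : E) ∈ C.ker ⊓ C.kerᗮ := ⟨congrArg Subtype.val hx, x.2⟩
    simpa [C.ker.inf_orthogonal_eq_bot] using hx'
  have hsurj : f.range = ⊤ := by
    refine LinearMap.range_eq_top.2 ?_
    rintro ⟨_, z, rfl⟩
    obtain ⟨z₁, hz₁, z₂, hz₂, rfl⟩ := C.ker.exists_add_mem_mem_orthogonal z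
    have hCz₁ : C z₁ = 0 := hz₁
    exact ⟨⟨z₂, hz₂⟩, Subtype.ext <| show C z₂ = C (z₁ + z₂) by rw [map_add, hCz₁, zero_add]⟩
  exact ⟨.ofBijective f hinj hsurj, fun _ => rfl⟩

theorem ContinuousLinearMap.exists_orthogonal_ker_equiv_range_comp_of_commute
    {F : Type*} [NormedAddCommGroup F] [InnerProductSpace 𝕜 F] [CompleteSpace F]
    (C : E →L[𝕜] F) (hC : IsClosed (C.range : Set F)) {S : E →L[𝕜] E} (hS : IsUnit S)
    (hSC : Commute S (adjoint C ∘L C)) :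
    ∃ e : C.kerᗮ ≃L[𝕜] C.range, ∀ x, (e x : F) = C (S x) := by
  have hSbij := isUnit_iff_bijective.1 hS
  have hker : (C ∘L S).ker = C.ker :=
    calc (C ∘L S).ker = (adjoint C ∘L C).ker.comap S := by
          rw [ker_adjoint_comp_self, toLinearMap_comp, LinearMap.ker_comp]
      _ = ((adjoint C ∘L C) ∘L S).ker := by
          rw [toLinearMap_comp (adjoint C ∘L C), LinearMap.ker_comp]
      _ = (S ∘L (adjoint C ∘L C)).ker := by rw [← mul_def, ← mul_def, hSC.eq]
      _ = C.ker := by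
          rw [toLinearMap_comp S,
            LinearMap.ker_comp_of_ker_eq_bot _ (LinearMap.ker_eq_bot.2 hSbij.1),
            ker_adjoint_comp_self]
  have hrange : (C ∘L S).range = C.range :=
    LinearMap.range_comp_of_range_eq_top _ (LinearMap.range_eq_top.2 hSbij.2)
  obtain ⟨e, he⟩ := (C ∘L S).exists_orthogonal_ker_equiv_range (hrange ▸ hC)
  exact ⟨(ContinuousLinearEquiv.ofEq _ _ (by rw [hker])).trans (e.trans (.ofEq _ _ hrange)),
    fun x => he _⟩

theorem ContinuousLinearMap.isSelfAdjoint_of_forall_sub_apply_mem_orthogonal_range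
    {P : E →L[𝕜] E} (hP : ∀ y, y - P y ∈ P.rangeᗮ) : IsSelfAdjoint P := by
  have hinner : ∀ x y, inner 𝕜 (P x) y = inner 𝕜 (P x) (P y) := fun x y => by
    have := (Submodule.mem_orthogonal _ _).1 (hP y) (P x) ⟨x, rfl⟩
    rwa [inner_sub_right, sub_eq_zero] at this
  refine isSelfAdjoint_iff_isSymmetric.2 fun x y => ?_
  simp only [coe_coe]
  rw [hinner, ← inner_conj_symm x (P y), hinner y x, inner_conj_symm]

end

namespace IsMP

variable {A : H₁ →L[ℂ] H₂} {B : H₂ →L[ℂ] H₁}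

theorem range_adjoint_eq (hB : IsMP A B) : (adjoint B).range = (A ∘L B).range := by
  obtain ⟨-, hBAB, hAB_orth, -⟩ := hB
  have hAB : IsSelfAdjoint (A ∘L B) :=
    isSelfAdjoint_of_forall_sub_apply_mem_orthogonal_range fun y =>
      Submodule.orthogonal_le (LinearMap.range_comp_le_range _ _) (hAB_orth y)
  apply le_antisymm
  · have hB' : adjoint B = (A ∘L B) ∘L adjoint B := by
      conv_lhs => rw [← hBAB, adjoint_comp, hAB.adjoint_eq]
    rw [hB', toLinearMap_comp]
    exact LinearMap.range_comp_le_range _ _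
  · rw [← hAB.adjoint_eq, adjoint_comp, toLinearMap_comp]
    exact LinearMap.range_comp_le_range _ _

theorem isClosed_range_adjoint (hB : IsMP A B) : IsClosed ((adjoint B).range : Set H₂) := by
  have hAB : IsIdempotentElem (A ∘L B) := by
    rw [IsIdempotentElem, mul_def, ← comp_assoc, comp_assoc A B A, hB.1]
  exact hB.range_adjoint_eq ▸ hAB.isClosed_range

end IsMP

theorem mp_restricts_to_iso_general (A : H₁ →L[ℂ] H₂) (B : H₂ →L[ℂ] H₁)
    (hB : IsMP A B)
    (S₁ : H₁ →L[ℂ] H₁)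
    (hS₁a : (S₁.comp S₁).comp (1 + B.comp (adjoint B)) = 1)
    (hS₁b : (1 + B.comp (adjoint B)).comp (S₁.comp S₁) = 1) :
    ∃ e : ((LinearMap.ker (↑(adjoint B) : H₁ →ₗ[ℂ] H₂))ᗮ : Submodule ℂ H₁) ≃L[ℂ]
        (LinearMap.range (↑(adjoint B) : H₁ →ₗ[ℂ] H₂) : Submodule ℂ H₂),
      ∀ x : ((LinearMap.ker (↑(adjoint B) : H₁ →ₗ[ℂ] H₂))ᗮ : Submodule ℂ H₁),
        (e x : H₂) = adjoint B (S₁ x) := by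
  let u : (H₁ →L[ℂ] H₁)ˣ := ⟨S₁ * S₁, 1 + B ∘L adjoint B, hS₁a, hS₁b⟩
  have hS₁ : IsUnit S₁ := (isUnit_pow_iff two_ne_zero).1 (by rw [sq]; exact u.isUnit)
  have hcomm : Commute S₁ (1 + B ∘L adjoint B) :=
    Commute.units_inv_right (u := u) ((Commute.refl S₁).mul_right (Commute.refl S₁))
  refine (adjoint B).exists_orthogonal_ker_equiv_range_comp_of_commute
    hB.isClosed_range_adjoint hS₁ ?_
  simpa [adjoint_adjoint] using hcomm.sub_right (Commute.one_right S₁)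

/-- For a bounded `A` with Moore–Penrose inverse `B` and
`S₁ = (I + BB*)^{-1/2}`, the operator `B*(I + BB*)^{-1/2}` restricts to an
isomorphism (a continuous linear equivalence) from `(null B*)ᗮ` onto
`range B*`. -/
theorem mp_restricts_to_iso (A : H₁ →L[ℂ] H₂) (B : H₂ →L[ℂ] H₁)
    (hB : IsMP A B)
    (S₁ : H₁ →L[ℂ] H₁) (hS₁pos : S₁.IsPositive)
    (hS₁a : (S₁.comp S₁).comp (1 + B.comp (adjoint B)) = 1)
    (hS₁b : (1 + B.comp (adjoint B)).comp (S₁.comp S₁) = 1) :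
    ∃ e : ((LinearMap.ker (↑(adjoint B) : H₁ →ₗ[ℂ] H₂))ᗮ : Submodule ℂ H₁) ≃L[ℂ]
        (LinearMap.range (↑(adjoint B) : H₁ →ₗ[ℂ] H₂) : Submodule ℂ H₂),
      ∀ x : ((LinearMap.ker (↑(adjoint B) : H₁ →ₗ[ℂ] H₂))ᗮ : Submodule ℂ H₁),
        (e x : H₂) = adjoint B (S₁ x) :=
  mp_restricts_to_iso_general A B hB S₁ hS₁a hS₁b
end

section
/- Let U be a bounded injective operator with dense range from a Hilbert space K into a Hilbert space H₂, and V = U⁻¹ its (closed, densely defined) inverse. Then range(U) = range((I + V*V)^{-1/2}). -/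
/-!
Put `T = V`, whose domain is `range U`. Testing `S² + T†T S² = 1` against `S² y` gives
`‖S² y‖² + ‖T S² y‖² = ‖S y‖²`, so `S y ↦ T S² y` is bounded on the range of `S`, which is
dense since `S` is self-adjoint and injective. Its continuous extension `B` has
`(S w, B w) ∈ graph T` for every `w` because `T` is closed; hence `range S ⊆ dom T`.
Conversely, for `u ∈ dom T` the same identity gives `|⟪u, z⟫| ≤ (‖S u‖ + ‖T u‖) ‖S z‖`, so
`S z ↦ ⟪u, z⟫` extends to a bounded functional `⟪w, ·⟫`, and then `S w = u`.
-/

open scoped InnerProductSpace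

theorem LinearPMap.IsClosed.mem_graph_of_denseRange {R E F G ι : Type*} [CommRing R]
    [AddCommGroup E] [Module R E] [TopologicalSpace E]
    [AddCommGroup F] [Module R F] [TopologicalSpace F] [TopologicalSpace G]
    {f : E →ₗ.[R] F} (hf : f.IsClosed) {A : G → E} {B : G → F}
    (hA : Continuous A) (hB : Continuous B) {e : ι → G} (he : DenseRange e)
    (h : ∀ i, (A (e i), B (e i)) ∈ f.graph) (w : G) : (A w, B w) ∈ f.graph :=
  he.induction_on w (hf.preimage (hA.prodMk hB)) h

section InnerProductSpace

variable {𝕜 E F : Type*} [RCLike 𝕜]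
  [NormedAddCommGroup E] [InnerProductSpace 𝕜 E] [CompleteSpace E]
  [NormedAddCommGroup F] [InnerProductSpace 𝕜 F]

theorem IsSelfAdjoint.denseRange_of_injective {S : E →L[𝕜] E} (hS : IsSelfAdjoint S)
    (hinj : Function.Injective S) : DenseRange S := by
  change Dense (S.range : Set E)
  rw [Submodule.dense_iff_topologicalClosure_eq_top,
    Submodule.topologicalClosure_eq_top_iff, S.orthogonal_range, hS.adjoint_eq]
  exact LinearMap.ker_eq_bot.mpr hinj

namespace LinearPMap

theorem inner_add_adjoint_apply {T : E →ₗ.[𝕜] F} (hT : Dense (T.domain : Set E))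
    (x : T.domain) (hx : T x ∈ T†.domain) (v : T.domain) :
    ⟪(x : E) + T† ⟨T x, hx⟩, v⟫_𝕜 = ⟪(x : E), v⟫_𝕜 + ⟪T x, T v⟫_𝕜 := by
  rw [inner_add_left, adjoint_isFormalAdjoint hT]

/-- `S` is a bounded square root of `(1 + T†T)⁻¹`: the identity `S² + T†T S² = 1` is stated in
its weak form, tested against the domain of `T`, which does not involve `T†`. -/
structure IsInvSqrtOneAddAdjointMul (T : E →ₗ.[𝕜] F) (S : E →L[𝕜] E) : Prop where
  isSelfAdjoint : IsSelfAdjoint S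
  sq_mem_domain : ∀ y, S (S y) ∈ T.domain
  inner_eq : ∀ (y : E) (v : T.domain),
    ⟪y, v⟫_𝕜 = ⟪S (S y), v⟫_𝕜 + ⟪T ⟨S (S y), sq_mem_domain y⟩, T v⟫_𝕜

namespace IsInvSqrtOneAddAdjointMul

variable {T : E →ₗ.[𝕜] F} {S : E →L[𝕜] E}

theorem of_add_adjoint_apply_eq (hT : Dense (T.domain : Set E)) (hS : IsSelfAdjoint S)
    (h₁ : ∀ y, S (S y) ∈ T.domain)
    (h₂ : ∀ y (h : S (S y) ∈ T.domain), T ⟨S (S y), h⟩ ∈ T†.domain)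
    (h : ∀ y (h₁ : S (S y) ∈ T.domain) (h₂ : T ⟨S (S y), h₁⟩ ∈ T†.domain),
      S (S y) + T† ⟨T ⟨S (S y), h₁⟩, h₂⟩ = y) :
    T.IsInvSqrtOneAddAdjointMul S where
  isSelfAdjoint := hS
  sq_mem_domain := h₁
  inner_eq y v := by
    conv_lhs => rw [← h y (h₁ y) (h₂ y (h₁ y))]
    exact inner_add_adjoint_apply hT ⟨S (S y), h₁ y⟩ _ v

theorem norm_sq_add_norm_sq (h : T.IsInvSqrtOneAddAdjointMul S) (y : E) :
    ‖S (S y)‖ ^ 2 + ‖T ⟨S (S y), h.sq_mem_domain y⟩‖ ^ 2 = ‖S y‖ ^ 2 := by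
  have key := h.inner_eq y ⟨S (S y), h.sq_mem_domain y⟩
  have hsym : ⟪y, S (S y)⟫_𝕜 = ⟪S y, S y⟫_𝕜 := (h.isSelfAdjoint.isSymmetric y (S y)).symm
  simp only [hsym, inner_self_eq_norm_sq_to_K] at key
  exact_mod_cast key.symm

theorem norm_apply_sq_le (h : T.IsInvSqrtOneAddAdjointMul S) (y : E) :
    ‖T ⟨S (S y), h.sq_mem_domain y⟩‖ ≤ ‖S y‖ := by
  have := h.norm_sq_add_norm_sq y
  nlinarith [norm_nonneg (S y), norm_nonneg (T ⟨S (S y), h.sq_mem_domain y⟩), sq_nonneg ‖S (S y)‖]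

theorem injective (h : T.IsInvSqrtOneAddAdjointMul S) (hT : Dense (T.domain : Set E)) :
    Function.Injective S := by
  refine (injective_iff_map_eq_zero S).mpr fun y hy => ?_
  have hsq : (⟨S (S y), h.sq_mem_domain y⟩ : T.domain) = 0 := by ext; simp [hy]
  refine hT.eq_zero_of_inner_left 𝕜 fun v hv => ?_
  have key := h.inner_eq y ⟨v, hv⟩
  rwa [hsq, T.map_zero, inner_zero_left, hy, ContinuousLinearMap.map_zero, inner_zero_left,
    add_zero] at key

theorem denseRange (h : T.IsInvSqrtOneAddAdjointMul S) (hT : Dense (T.domain : Set E)) :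
    DenseRange S :=
  h.isSelfAdjoint.denseRange_of_injective (h.injective hT)

theorem range_subset_domain [CompleteSpace F] (h : T.IsInvSqrtOneAddAdjointMul S)
    (hT : Dense (T.domain : Set E)) (hTc : T.IsClosed) : Set.range S ⊆ T.domain := by
  let f : E →ₗ[𝕜] F :=
    T.toFun ∘ₗ (S.toLinearMap ∘ₗ S.toLinearMap).codRestrict T.domain h.sq_mem_domain
  have hf : ∀ z, ‖f z‖ ≤ 1 * ‖S z‖ := fun z => (one_mul ‖S z‖).symm ▸ h.norm_apply_sq_le z
  let g : E →L[𝕜] F := f.extendOfNorm S.toLinearMap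
  have hg : ∀ z, g (S z) = T ⟨S (S z), h.sq_mem_domain z⟩ :=
    LinearMap.extendOfNorm_eq (h.denseRange hT) ⟨1, hf⟩
  have hgraph : ∀ w, (S w, g w) ∈ T.graph :=
    hTc.mem_graph_of_denseRange S.continuous g.continuous (h.denseRange hT) fun z =>
      hg z ▸ T.mem_graph ⟨S (S z), h.sq_mem_domain z⟩
  rintro _ ⟨w, rfl⟩
  exact mem_domain_of_mem_graph (hgraph w)

theorem domain_subset_range (h : T.IsInvSqrtOneAddAdjointMul S) (hT : Dense (T.domain : Set E)) :
    (T.domain : Set E) ⊆ Set.range S := by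
  intro u hu
  have hbound : ∀ z, ‖innerₛₗ 𝕜 u z‖ ≤ (‖S u‖ + ‖T ⟨u, hu⟩‖) * ‖S z‖ := fun z =>
    calc ‖⟪u, z⟫_𝕜‖ = ‖⟪S z, S u⟫_𝕜 + ⟪T ⟨S (S z), h.sq_mem_domain z⟩, T ⟨u, hu⟩⟫_𝕜‖ := by
          rw [norm_inner_symm, h.inner_eq z ⟨u, hu⟩]
          exact congrArg (‖· + _‖) (h.isSelfAdjoint.isSymmetric (S z) u)
      _ ≤ ‖S z‖ * ‖S u‖ + ‖S z‖ * ‖T ⟨u, hu⟩‖ :=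
          norm_add_le_of_le (norm_inner_le_norm _ _) ((norm_inner_le_norm _ _).trans
            (mul_le_mul_of_nonneg_right (h.norm_apply_sq_le z) (norm_nonneg _)))
      _ = (‖S u‖ + ‖T ⟨u, hu⟩‖) * ‖S z‖ := by ring
  let g : StrongDual 𝕜 E := (innerₛₗ 𝕜 u).extendOfNorm S.toLinearMap
  refine ⟨(InnerProductSpace.toDual 𝕜 E).symm g, ext_inner_right 𝕜 fun z =>
    (h.isSelfAdjoint.isSymmetric _ z).trans ?_⟩
  rw [InnerProductSpace.toDual_symm_apply]
  exact LinearMap.extendOfNorm_eq (h.denseRange hT) ⟨_, hbound⟩ z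

theorem domain_eq_range [CompleteSpace F] (h : T.IsInvSqrtOneAddAdjointMul S)
    (hT : Dense (T.domain : Set E)) (hTc : T.IsClosed) : (T.domain : Set E) = Set.range S :=
  (h.domain_subset_range hT).antisymm (h.range_subset_domain hT hTc)

end IsInvSqrtOneAddAdjointMul
end LinearPMap
end InnerProductSpace

variable {K H₂ : Type*}
  [NormedAddCommGroup K] [InnerProductSpace ℂ K] [CompleteSpace K]
  [NormedAddCommGroup H₂] [InnerProductSpace ℂ H₂] [CompleteSpace H₂]

theorem range_embedding_eq_range_sqrt_general (U : K →L[ℂ] H₂)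
    (hUdense : Dense (Set.range U))
    (V : H₂ →ₗ.[ℂ] K)
    (hVclosed : V.IsClosed)
    (hVdom : (V.domain : Set H₂) = Set.range U)
    (S : H₂ →L[ℂ] H₂) (hSpos : S.IsPositive)
    (hS1 : ∀ y : H₂, S (S y) ∈ V.domain)
    (hS2 : ∀ (y : H₂) (h1 : S (S y) ∈ V.domain), V ⟨S (S y), h1⟩ ∈ V.adjoint.domain)
    (hS : ∀ (y : H₂) (h1 : S (S y) ∈ V.domain)
      (h2 : V ⟨S (S y), h1⟩ ∈ V.adjoint.domain),
      S (S y) + V.adjoint ⟨V ⟨S (S y), h1⟩, h2⟩ = y) :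
    Set.range U = Set.range S := by
  have hVdense : Dense (V.domain : Set H₂) := hVdom ▸ hUdense
  have hSV : V.IsInvSqrtOneAddAdjointMul S :=
    .of_add_adjoint_apply_eq hVdense hSpos.isSelfAdjoint hS1 hS2 hS
  rw [← hVdom, hSV.domain_eq_range hVdense hVclosed]

/-- Let `U` be a bounded injective operator with dense range from `K` into
`H₂` and `V = U⁻¹` its closed densely defined inverse (with domain `range U`).
If `S = (I + V*V)^{-1/2}` is the positive bounded square root of the inverse
of `I + V*V`, then `range U = range ((I + V*V)^{-1/2})`. -/
theorem range_embedding_eq_range_sqrt (U : K →L[ℂ] H₂)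
    (hUinj : Function.Injective U)
    (hUdense : Dense (Set.range U))
    (V : H₂ →ₗ.[ℂ] K)
    (hVclosed : V.IsClosed)
    (hVdom : (V.domain : Set H₂) = Set.range U)
    (hVU : ∀ (x : K) (h : U x ∈ V.domain), V ⟨U x, h⟩ = x)
    (S : H₂ →L[ℂ] H₂) (hSpos : S.IsPositive)
    (hS1 : ∀ y : H₂, S (S y) ∈ V.domain)
    (hS2 : ∀ (y : H₂) (h1 : S (S y) ∈ V.domain), V ⟨S (S y), h1⟩ ∈ V.adjoint.domain)
    (hS : ∀ (y : H₂) (h1 : S (S y) ∈ V.domain)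
      (h2 : V ⟨S (S y), h1⟩ ∈ V.adjoint.domain),
      S (S y) + V.adjoint ⟨V ⟨S (S y), h1⟩, h2⟩ = y) :
    Set.range U = Set.range S :=
  range_embedding_eq_range_sqrt_general U hUdense V hVclosed hVdom S hSpos hS1 hS2 hS
end

section
/- Let A be a closed densely defined operator from H₁ to H₂. Then (I + AA*)⁻¹ and A*(I + AA*)⁻¹ are everywhere defined bounded operators, (I + AA*)⁻¹ is self-adjoint, and (I + A*A)⁻¹ A* ⊆ A*(I + AA*)⁻¹. -/
/-!
Let `P` and `Q = 1 - P` be the orthogonal projections of `H₁ ⊕ H₂` onto the closed graph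
`G(A)` and onto `G(A)ᗮ = {(-A*w, w) : w ∈ dom A*}`. Splitting `(0, y) = (x, Ax) + (-A*w, w)`
gives `A*w = x` and `w + AA*w = y`, so `w = (I + AA*)⁻¹ y` and `x = A*(I + AA*)⁻¹ y` are
coordinates of `Q (0, y)` and `P (0, y)`: bounded, and `(I + AA*)⁻¹` is self-adjoint as a
compression of `Q`. Splitting `(x, 0)` the same way yields `(I + A*A)⁻¹`. For `y ∈ dom A*` the
vector `(A*y, 0) - (0, y)` lies in `G(A)ᗮ`, so `(A*y, 0)` and `(0, y)` have the same projection
under `P`, which is the inclusion `(I + A*A)⁻¹ A* ⊆ A*(I + AA*)⁻¹`.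
-/

namespace WithLp

variable (𝕜 E F : Type*) [RCLike 𝕜] [NormedAddCommGroup E] [InnerProductSpace 𝕜 E]
  [NormedAddCommGroup F] [InnerProductSpace 𝕜 F]

noncomputable def inlL : E →L[𝕜] WithLp 2 (E × F) :=
  (prodContinuousLinearEquiv 2 𝕜 E F).symm.toContinuousLinearMap ∘L
    ContinuousLinearMap.inl 𝕜 E F

noncomputable def inrL : F →L[𝕜] WithLp 2 (E × F) :=
  (prodContinuousLinearEquiv 2 𝕜 E F).symm.toContinuousLinearMap ∘L
    ContinuousLinearMap.inr 𝕜 E F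

@[simp] theorem inrL_apply (y : F) : inrL 𝕜 E F y = toLp 2 (0, y) := rfl

theorem adjoint_inrL [CompleteSpace E] [CompleteSpace F] :
    (inrL 𝕜 E F).adjoint = sndL 2 𝕜 E F :=
  (((sndL 2 𝕜 E F).eq_adjoint_iff _).mpr fun z y => by simp).symm

end WithLp

namespace LinearPMap

section Graph

variable {R E F G : Type*} [Ring R] [AddCommGroup E] [Module R E] [AddCommGroup F] [Module R F]
  [AddCommGroup G] [Module R G] {f : E →ₗ.[R] F} {g : F →ₗ.[R] G} {u : E} {v : F} {w : G}

theorem apply_of_mem_graph (hf : (u, v) ∈ f.graph) (hu : u ∈ f.domain) : f ⟨u, hu⟩ = v :=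
  ((image_iff hu).mpr hf).symm

theorem apply_mem_domain_of_mem_graph (hf : (u, v) ∈ f.graph) (hg : (v, w) ∈ g.graph)
    (hu : u ∈ f.domain) : f ⟨u, hu⟩ ∈ g.domain := by
  rw [apply_of_mem_graph hf hu]
  exact mem_domain_of_mem_graph hg

theorem apply_apply_of_mem_graph (hf : (u, v) ∈ f.graph) (hg : (v, w) ∈ g.graph)
    (hu : u ∈ f.domain) (hv : f ⟨u, hu⟩ ∈ g.domain) : g ⟨f ⟨u, hu⟩, hv⟩ = w :=
  apply_of_mem_graph (by rw [apply_of_mem_graph hf hu]; exact hg) hv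

end Graph

variable {𝕜 E F : Type*} [RCLike 𝕜] [NormedAddCommGroup E] [InnerProductSpace 𝕜 E]
  [NormedAddCommGroup F] [InnerProductSpace 𝕜 F]

/-- `LinearPMap.graph` lives in `E × F` with the sup norm; orthogonality of graphs needs the
Hilbert sum `WithLp 2 (E × F)`. -/
def graphL2 (T : E →ₗ.[𝕜] F) : Submodule 𝕜 (WithLp 2 (E × F)) :=
  T.graph.comap (WithLp.linearEquiv 2 𝕜 (E × F)).toLinearMap

theorem mem_graphL2 {T : E →ₗ.[𝕜] F} {z : WithLp 2 (E × F)} :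
    z ∈ T.graphL2 ↔ (z.fst, z.snd) ∈ T.graph :=
  Iff.rfl

theorem hasOrthogonalProjection_graphL2 [CompleteSpace E] [CompleteSpace F]
    {T : E →ₗ.[𝕜] F} (hT : T.IsClosed) : T.graphL2.HasOrthogonalProjection :=
  have : CompleteSpace T.graphL2 :=
    (hT.preimage (WithLp.prod_continuous_ofLp 2 E F)).completeSpace_coe
  inferInstance

theorem mem_graphL2_orthogonal_iff [CompleteSpace E] {T : E →ₗ.[𝕜] F}
    (hT : Dense (T.domain : Set E)) {w : WithLp 2 (E × F)} :
    w ∈ T.graphL2ᗮ ↔ (w.snd, -w.fst) ∈ T.adjoint.graph := by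
  rw [adjoint_graph_eq_graph_adjoint hT, Submodule.mem_adjoint_iff, Submodule.mem_orthogonal]
  simp only [inner_neg_right, sub_neg_eq_add, WithLp.prod_inner_apply, WithLp.ofLp_fst,
    WithLp.ofLp_snd]
  constructor
  · intro h a b hab
    rw [add_comm]
    exact h (WithLp.toLp 2 (a, b)) hab
  · intro h u hu
    rw [add_comm]
    exact h u.fst u.snd hu

section Resolvents

variable (T : E →ₗ.[𝕜] F) [T.graphL2.HasOrthogonalProjection]

/-- `(1 + T T†)⁻¹` -/
noncomputable def invOneAddMulAdjoint : F →L[𝕜] F :=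
  WithLp.sndL 2 𝕜 E F ∘L T.graphL2ᗮ.starProjection ∘L WithLp.inrL 𝕜 E F

/-- `T† (1 + T T†)⁻¹` -/
noncomputable def adjointInvOneAddMulAdjoint : F →L[𝕜] E :=
  WithLp.fstL 2 𝕜 E F ∘L T.graphL2.starProjection ∘L WithLp.inrL 𝕜 E F

/-- `(1 + T† T)⁻¹` -/
noncomputable def invOneAddAdjointMul : E →L[𝕜] E :=
  WithLp.fstL 2 𝕜 E F ∘L T.graphL2.starProjection ∘L WithLp.inlL 𝕜 E F

theorem invOneAddMulAdjoint_apply (y : F) :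
    T.invOneAddMulAdjoint y = y - (T.graphL2.starProjection (WithLp.toLp 2 (0, y))).snd := by
  simp [invOneAddMulAdjoint, Submodule.starProjection_orthogonal_val]

theorem adjointInvOneAddMulAdjoint_apply (y : F) :
    T.adjointInvOneAddMulAdjoint y = (T.graphL2.starProjection (WithLp.toLp 2 (0, y))).fst :=
  rfl

theorem invOneAddAdjointMul_apply (x : E) :
    T.invOneAddAdjointMul x = (T.graphL2.starProjection (WithLp.toLp 2 (x, 0))).fst :=
  rfl

theorem isSelfAdjoint_invOneAddMulAdjoint [CompleteSpace E] [CompleteSpace F] :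
    IsSelfAdjoint T.invOneAddMulAdjoint := by
  have := (isSelfAdjoint_starProjection T.graphL2ᗮ).adjoint_conj (WithLp.inrL 𝕜 E F)
  rwa [WithLp.adjoint_inrL] at this

variable {T}

theorem starProjection_orthogonal_graphL2_mem_graph_adjoint [CompleteSpace E]
    (hT : Dense (T.domain : Set E)) (z : WithLp 2 (E × F)) :
    ((T.graphL2ᗮ.starProjection z).snd, -(T.graphL2ᗮ.starProjection z).fst) ∈
      T.adjoint.graph :=
  (mem_graphL2_orthogonal_iff hT).mp (Submodule.starProjection_apply_mem _ z)

theorem invOneAddMulAdjoint_mem_graph_adjoint [CompleteSpace E]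
    (hT : Dense (T.domain : Set E)) (y : F) :
    (T.invOneAddMulAdjoint y, T.adjointInvOneAddMulAdjoint y) ∈ T.adjoint.graph := by
  convert starProjection_orthogonal_graphL2_mem_graph_adjoint hT (WithLp.toLp 2 (0, y)) using 2
  all_goals simp [invOneAddMulAdjoint_apply, adjointInvOneAddMulAdjoint_apply,
    Submodule.starProjection_orthogonal_val]

theorem adjointInvOneAddMulAdjoint_mem_graph (y : F) :
    (T.adjointInvOneAddMulAdjoint y, y - T.invOneAddMulAdjoint y) ∈ T.graph := by
  rw [invOneAddMulAdjoint_apply, sub_sub_cancel]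
  exact Submodule.starProjection_apply_mem T.graphL2 (WithLp.toLp 2 (0, y))

theorem exists_invOneAddAdjointMul_mem_graph [CompleteSpace E]
    (hT : Dense (T.domain : Set E)) (x : E) :
    ∃ w, (T.invOneAddAdjointMul x, w) ∈ T.graph ∧
      (w, x - T.invOneAddAdjointMul x) ∈ T.adjoint.graph := by
  set z := WithLp.toLp 2 (x, (0 : F))
  refine ⟨(T.graphL2.starProjection z).snd,
    mem_graphL2.mp (Submodule.starProjection_apply_mem _ z), ?_⟩
  convert neg_mem (starProjection_orthogonal_graphL2_mem_graph_adjoint hT z) using 1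
  simp [z, invOneAddAdjointMul_apply, Submodule.starProjection_orthogonal_val]

theorem invOneAddAdjointMul_adjoint_apply [CompleteSpace E]
    (hT : Dense (T.domain : Set E)) (y : T.adjoint.domain) :
    T.invOneAddAdjointMul (T.adjoint y) = T.adjointInvOneAddMulAdjoint y := by
  have hperp : WithLp.toLp 2 (T.adjoint y, -(y : F)) ∈ T.graphL2ᗮ :=
    (mem_graphL2_orthogonal_iff hT).mpr (neg_mem (T.adjoint.mem_graph y))
  have hproj : T.graphL2.starProjection (WithLp.toLp 2 (T.adjoint y, 0)) =
      T.graphL2.starProjection (WithLp.toLp 2 (0, (y : F))) := by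
    rw [← sub_eq_zero, ← ContinuousLinearMap.map_sub,
      Submodule.starProjection_apply_eq_zero_iff]
    simpa [← WithLp.toLp_sub] using hperp
  rw [invOneAddAdjointMul_apply, adjointInvOneAddMulAdjoint_apply, hproj]

end Resolvents

end LinearPMap

variable {H₁ H₂ : Type*}
  [NormedAddCommGroup H₁] [InnerProductSpace ℂ H₁] [CompleteSpace H₁]
  [NormedAddCommGroup H₂] [InnerProductSpace ℂ H₂] [CompleteSpace H₂]

/-- Von Neumann's theorem for a closed densely defined operator `A` from `H₁`
to `H₂`: the resolvent `R = (I + AA*)⁻¹` is an everywhere defined bounded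
self-adjoint operator, `S = A*(I + AA*)⁻¹` is everywhere defined and bounded,
and `(I + A*A)⁻¹ A* ⊆ A*(I + AA*)⁻¹`, i.e. the two operators agree on the
domain of `A*` (here `R' = (I + A*A)⁻¹`). -/
theorem vonNeumann_resolvents (A : H₁ →ₗ.[ℂ] H₂)
    (hA : A.IsClosed) (hAd : Dense (A.domain : Set H₁)) :
    ∃ (R : H₂ →L[ℂ] H₂) (R' : H₁ →L[ℂ] H₁) (S : H₂ →L[ℂ] H₁),
      IsSelfAdjoint R ∧
      (∀ y : H₂, R y ∈ A.adjoint.domain) ∧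
      (∀ (y : H₂) (h1 : R y ∈ A.adjoint.domain), A.adjoint ⟨R y, h1⟩ ∈ A.domain) ∧
      (∀ (y : H₂) (h1 : R y ∈ A.adjoint.domain)
        (h2 : A.adjoint ⟨R y, h1⟩ ∈ A.domain),
        R y + A ⟨A.adjoint ⟨R y, h1⟩, h2⟩ = y) ∧
      (∀ (y : H₂) (h1 : R y ∈ A.adjoint.domain), S y = A.adjoint ⟨R y, h1⟩) ∧
      (∀ x : H₁, R' x ∈ A.domain) ∧
      (∀ (x : H₁) (h1 : R' x ∈ A.domain), A ⟨R' x, h1⟩ ∈ A.adjoint.domain) ∧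
      (∀ (x : H₁) (h1 : R' x ∈ A.domain) (h2 : A ⟨R' x, h1⟩ ∈ A.adjoint.domain),
        R' x + A.adjoint ⟨A ⟨R' x, h1⟩, h2⟩ = x) ∧
      (∀ (y : H₂) (hy : y ∈ A.adjoint.domain), R' (A.adjoint ⟨y, hy⟩) = S y) := by
  have := LinearPMap.hasOrthogonalProjection_graphL2 hA
  have hR y := A.invOneAddMulAdjoint_mem_graph_adjoint hAd y
  have hS y := A.adjointInvOneAddMulAdjoint_mem_graph y
  choose w hw hw' using A.exists_invOneAddAdjointMul_mem_graph hAd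
  exact ⟨A.invOneAddMulAdjoint, A.invOneAddAdjointMul, A.adjointInvOneAddMulAdjoint,
    A.isSelfAdjoint_invOneAddMulAdjoint,
    fun y => LinearPMap.mem_domain_of_mem_graph (hR y),
    fun y => LinearPMap.apply_mem_domain_of_mem_graph (hR y) (hS y),
    fun y h1 h2 => by
      rw [LinearPMap.apply_apply_of_mem_graph (hR y) (hS y) h1 h2, add_sub_cancel],
    fun y h1 => (LinearPMap.apply_of_mem_graph (hR y) h1).symm,
    fun x => LinearPMap.mem_domain_of_mem_graph (hw x),
    fun x => LinearPMap.apply_mem_domain_of_mem_graph (hw x) (hw' x),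
    fun x h1 h2 => by
      rw [LinearPMap.apply_apply_of_mem_graph (hw x) (hw' x) h1 h2, add_sub_cancel],
    fun y hy => A.invOneAddAdjointMul_adjoint_apply hAd ⟨y, hy⟩⟩
end
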